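/- For the lowest-degree trimmed polynomial spaces on R^n: the range of d^k on P_1^-Λ^k equals P_0Λ^{k+1}, which equals the null space of δ_{k+1} on P_1^{*,-}Λ^{k+1}; and the null space of d^k on P_1^-Λ^k equals P_0Λ^k, which equals the range of δ_{k+1} on P_1^{*,-}Λ^{k+1}. -/

import Mathlib

open MvPolynomial Finset MeasureTheory

/-- Strictly increasing `k`-indices in `{1,…,n}`, modelled as `k`-element subsets of `Fin n`. -/
abbrev Idx (n k : ℕ) := {s : Finset (Fin n) // s.card = k}

/-- A differential `k`-form with polynomial coefficients on `ℝⁿ`: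
one polynomial coefficient for each increasing `k`-index. -/
abbrev Form (n k : ℕ) := Idx n k → MvPolynomial (Fin n) ℝ

/-- The sign `(-1)^{#\{j ∈ s : j < i\}}`. -/
noncomputable def sgn {n : ℕ} (s : Finset (Fin n)) (i : Fin n) : ℝ :=
  (-1) ^ (s.filter (· < i)).card

def eraseIdx {n k : ℕ} (s : Idx n (k+1)) {i : Fin n} (hi : i ∈ s.1) : Idx n k :=
  ⟨s.1.erase i, by simp [Finset.card_erase_of_mem hi, s.2]⟩

def insertIdx {n k : ℕ} (s : Idx n k) {i : Fin n} (hi : i ∉ s.1) : Idx n (k+1) :=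
  ⟨insert i s.1, by simp [Finset.card_insert_of_notMem hi, s.2]⟩

/-- The exterior derivative `d^k`. -/
noncomputable def extd (n k : ℕ) : Form n k →ₗ[ℝ] Form n (k+1) where
  toFun ω := fun s => ∑ i ∈ s.1.attach, sgn s.1 i.1 • pderiv i.1 (ω (eraseIdx s i.2))
  map_add' ω η := by
    funext s
    simp [Finset.sum_add_distrib, smul_add]
  map_smul' c ω := by
    funext s
    simp only [Pi.smul_apply, RingHom.id_apply]
    rw [Finset.smul_sum]
    exact Finset.sum_congr rfl (fun i _ => by rw [(pderiv i.1).map_smul, smul_comm])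

/-- The Koszul operator `κ` (contraction with the position vector field). -/
noncomputable def koszul (n k : ℕ) : Form n (k+1) →ₗ[ℝ] Form n k where
  toFun ω := fun s =>
    ∑ i ∈ (s.1ᶜ).attach, sgn s.1 i.1 • (X i.1 * ω (insertIdx s (Finset.mem_compl.mp i.2)))
  map_add' ω η := by
    funext s
    simp [Finset.sum_add_distrib, mul_add, smul_add]
  map_smul' c ω := by
    funext s
    simp only [Pi.smul_apply, RingHom.id_apply, mul_smul_comm]
    rw [Finset.smul_sum]
    exact Finset.sum_congr rfl (fun i _ => (smul_comm _ _ _))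

/-- The codifferential `δ_{k+1}` (the formal adjoint of `d^k` on Euclidean `ℝⁿ`,
which coincides with `(-1)^{(k+1)n} ⋆ d^{n-k-1} ⋆`). -/
noncomputable def codiff (n k : ℕ) : Form n (k+1) →ₗ[ℝ] Form n k where
  toFun ω := fun s =>
    -∑ i ∈ (s.1ᶜ).attach, sgn s.1 i.1 • pderiv i.1 (ω (insertIdx s (Finset.mem_compl.mp i.2)))
  map_add' ω η := by
    funext s
    simp [Finset.sum_add_distrib, smul_add]
    ring
  map_smul' c ω := by
    funext s
    simp only [Pi.smul_apply, RingHom.id_apply, smul_neg, neg_inj]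
    rw [Finset.smul_sum]
    exact Finset.sum_congr rfl (fun i _ => by rw [(pderiv i.1).map_smul, smul_comm])

/-- The operator `κ^δ = ⋆ ∘ κ ∘ ⋆` (exterior multiplication by `Σ xᵢ dxⁱ`, up to sign). -/
noncomputable def kappaDelta (n k : ℕ) : Form n k →ₗ[ℝ] Form n (k+1) where
  toFun ω := fun s => ∑ i ∈ s.1.attach, sgn s.1 i.1 • (X i.1 * ω (eraseIdx s i.2))
  map_add' ω η := by
    funext s
    simp [Finset.sum_add_distrib, mul_add, smul_add]
  map_smul' c ω := by
    funext s
    simp only [Pi.smul_apply, RingHom.id_apply, mul_smul_comm]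
    rw [Finset.smul_sum]
    exact Finset.sum_congr rfl (fun i _ => (smul_comm _ _ _))

/-- Sign of the permutation `(t, tᶜ) ↦ (1,…,n)`, i.e. `⋆ dx^t = starSign t · dx^{tᶜ}`. -/
noncomputable def starSign {n : ℕ} (t : Finset (Fin n)) : ℝ :=
  (-1) ^ (∑ i ∈ t, ((tᶜ).filter (· < i)).card)

/-- The Hodge star operator on `k`-forms on `ℝⁿ`, `k + l = n`. -/
noncomputable def hodge (n k l : ℕ) (h : k + l = n) : Form n k →ₗ[ℝ] Form n l where
  toFun ω := fun s => starSign (s.1ᶜ) •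
    ω ⟨s.1ᶜ, by rw [Finset.card_compl, s.2, Fintype.card_fin]; omega⟩
  map_add' ω η := by funext s; simp [smul_add]
  map_smul' c ω := by funext s; simp only [Pi.smul_apply, RingHom.id_apply]; rw [smul_comm]

/-- The monomial form `x_τ dx^σ`. -/
noncomputable def monForm (n k : ℕ) (τ : Finset (Fin n)) (σ : Idx n k) : Form n k :=
  fun s => if s = σ then ∏ i ∈ τ, X i else 0

/-- `Q_1^-Λ^k = span{ x_τ dx^σ : |σ| = k, 0 ≤ |τ| ≤ n-k, τ ⊆ σᶜ }`. -/
noncomputable def Qm (n k : ℕ) : Submodule ℝ (Form n k) :=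
  Submodule.span ℝ
    {ω | ∃ (τ : Finset (Fin n)) (σ : Idx n k), τ.card ≤ n - k ∧ τ ⊆ (σ.1)ᶜ ∧ ω = monForm n k τ σ}

/-- `Q_1^{*,-}Λ^k = span{ x_τ' dx^σ' : |σ'| = k, 0 ≤ |τ'| ≤ k, τ' ⊆ σ' }`. -/
noncomputable def Qs (n k : ℕ) : Submodule ℝ (Form n k) :=
  Submodule.span ℝ
    {ω | ∃ (τ : Finset (Fin n)) (σ : Idx n k), τ.card ≤ k ∧ τ ⊆ σ.1 ∧ ω = monForm n k τ σ}

/-- `P_0Λ^k`: forms with constant coefficients. -/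
noncomputable def P0 (n k : ℕ) : Submodule ℝ (Form n k) :=
  Submodule.span ℝ {ω | ∃ σ : Idx n k, ω = monForm n k ∅ σ}

/-- The Whitney space `P_1^-Λ^k = P_0Λ^k + κ(P_0Λ^{k+1})`. -/
noncomputable def Pm (n k : ℕ) : Submodule ℝ (Form n k) :=
  P0 n k ⊔ Submodule.map (koszul n k) (P0 n (k+1))

/-- The star Whitney space `P_1^{*,-}Λ^{k+1} = P_0Λ^{k+1} + κ^δ(P_0Λ^k)`. -/
noncomputable def PsS (n k : ℕ) : Submodule ℝ (Form n (k+1)) :=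
  P0 n (k+1) ⊔ Submodule.map (kappaDelta n k) (P0 n k)

/-- `L²` inner product of `k`-forms on the centered box `[-r, r]`. -/
noncomputable def binner (n k : ℕ) (r : Fin n → ℝ) (ω η : Form n k) : ℝ :=
  ∑ s : Idx n k, ∫ x in Set.Icc (fun i => -(r i)) r, eval x (ω s * η s)

/-- `L²` inner product of `k`-forms on the reference cube `T = [-1,1]ⁿ`. -/
noncomputable def finner (n k : ℕ) (ω η : Form n k) : ℝ :=
  binner n k (fun _ => (1 : ℝ)) ω η

/-!
On forms with constant coefficients the Koszul operator inverts `d` up to a nonzero factor,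
`d (κ ω) = (k + 1) ω`, and dually `δ (κ^δ ω) = -(n - k) ω`; both are the degree-zero case of
the homotopy formula, since only the `xᵢ` coming from `κ` or `κ^δ` is differentiated. As `d`
and `δ` kill constant forms, all four identities then follow from linear algebra: if `f`
vanishes on `A` and `f ∘ g` is an invertible scalar on `B`, then `f` maps `A ⊔ g(B)` onto `B`
and its kernel there is `A`.
-/

namespace Submodule

variable {R M N : Type*} [Semiring R] [AddCommMonoid M] [Module R M] [AddCommMonoid N] [Module R N]
  {f : M →ₗ[R] N} {g : N →ₗ[R] M} {A : Submodule R M} {B : Submodule R N} {c : R}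

theorem map_sup_map_eq_of_comp_eq_smul (hA : A ≤ LinearMap.ker f) (hc : IsUnit c)
    (hfg : ∀ x ∈ B, f (g x) = c • x) : (A ⊔ B.map g).map f = B := by
  obtain ⟨u, rfl⟩ := hc
  apply le_antisymm
  · rw [Submodule.map_sup, sup_le_iff, Submodule.map_le_iff_le_comap]
    refine ⟨fun a ha => by simp [LinearMap.mem_ker.mp (hA ha)], ?_⟩
    rintro _ ⟨_, ⟨b, hb, rfl⟩, rfl⟩
    rw [hfg b hb]
    exact B.smul_mem _ hb
  · intro x hx
    have hux : (↑u⁻¹ : R) • x ∈ B := B.smul_mem _ hx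
    refine ⟨g ((↑u⁻¹ : R) • x), Submodule.mem_sup_right ⟨_, hux, rfl⟩, ?_⟩
    rw [hfg _ hux, smul_smul, Units.mul_inv, one_smul]

theorem ker_inf_sup_map_eq_of_comp_eq_smul (hA : A ≤ LinearMap.ker f) (hc : IsUnit c)
    (hfg : ∀ x ∈ B, f (g x) = c • x) : LinearMap.ker f ⊓ (A ⊔ B.map g) = A := by
  refine le_antisymm ?_ fun a ha => ⟨hA ha, Submodule.mem_sup_left ha⟩
  rintro x ⟨hx, hxAB⟩
  obtain ⟨a, ha, _, ⟨b, hb, rfl⟩, rfl⟩ := Submodule.mem_sup.mp hxAB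
  have hcb : c • b = 0 := calc
    c • b = f (a + g b) := by rw [map_add, LinearMap.mem_ker.mp (hA ha), zero_add, hfg b hb]
    _ = 0 := hx
  rw [(hc.smul_eq_zero).mp hcb, map_zero, add_zero]
  exact ha

end Submodule

lemma sgn_mul_self {n : ℕ} (s : Finset (Fin n)) (i : Fin n) : sgn s i * sgn s i = 1 := by
  rw [sgn, ← pow_add, Even.neg_one_pow ⟨_, rfl⟩]

lemma sgn_erase_self {n : ℕ} (s : Finset (Fin n)) (i : Fin n) : sgn (s.erase i) i = sgn s i := by
  rw [sgn, sgn, Finset.filter_erase, Finset.erase_eq_of_notMem (by simp)]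

lemma sgn_insert_self {n : ℕ} (s : Finset (Fin n)) (i : Fin n) : sgn (insert i s) i = sgn s i := by
  simp [sgn, Finset.filter_insert]

section ConstantCoefficients

variable {n k : ℕ}

lemma extd_eq_zero_of_pderiv_eq_zero {ω : Form n k} (hω : ∀ s i, pderiv i (ω s) = 0) :
    extd n k ω = 0 := by
  funext t
  simp [extd, hω]

lemma codiff_eq_zero_of_pderiv_eq_zero {ω : Form n (k+1)} (hω : ∀ s i, pderiv i (ω s) = 0) :
    codiff n k ω = 0 := by
  funext t
  simp [codiff, hω]

lemma pderiv_koszul_apply {ω : Form n (k+1)} (hω : ∀ s i, pderiv i (ω s) = 0)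
    (s : Idx n k) {i : Fin n} (hi : i ∉ s.1) :
    pderiv i (koszul n k ω s) = sgn s.1 i • ω (insertIdx s hi) := by
  simp only [koszul, LinearMap.coe_mk, AddHom.coe_mk, map_sum]
  rw [Finset.sum_eq_single_of_mem ⟨i, Finset.mem_compl.mpr hi⟩ (Finset.mem_attach _ _)]
  · simp [Derivation.leibniz, hω]
  · rintro j - hj
    have hji : (j : Fin n) ≠ i := fun h => hj (Subtype.ext h)
    simp [Derivation.leibniz, hω, pderiv_X_of_ne hji]

lemma pderiv_kappaDelta_apply {ω : Form n k} (hω : ∀ s i, pderiv i (ω s) = 0)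
    (s : Idx n (k+1)) {i : Fin n} (hi : i ∈ s.1) :
    pderiv i (kappaDelta n k ω s) = sgn s.1 i • ω (eraseIdx s hi) := by
  simp only [kappaDelta, LinearMap.coe_mk, AddHom.coe_mk, map_sum]
  rw [Finset.sum_eq_single_of_mem ⟨i, hi⟩ (Finset.mem_attach _ _)]
  · simp [Derivation.leibniz, hω]
  · rintro j - hj
    have hji : (j : Fin n) ≠ i := fun h => hj (Subtype.ext h)
    simp [Derivation.leibniz, hω, pderiv_X_of_ne hji]

lemma extd_koszul_of_pderiv_eq_zero {ω : Form n (k+1)} (hω : ∀ s i, pderiv i (ω s) = 0) :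
    extd n k (koszul n k ω) = ((k + 1 : ℕ) : ℝ) • ω := by
  funext t
  have hterm : ∀ i ∈ t.1.attach,
      sgn t.1 i.1 • pderiv i.1 (koszul n k ω (eraseIdx t i.2)) = ω t := by
    rintro ⟨i, hi⟩ -
    have hinsert : insertIdx (eraseIdx t hi) (Finset.notMem_erase i t.1) = t :=
      Subtype.ext (Finset.insert_erase hi)
    rw [pderiv_koszul_apply hω _ (Finset.notMem_erase i t.1), hinsert, smul_smul,
      show sgn (eraseIdx t hi).1 i = sgn t.1 i from sgn_erase_self _ _, sgn_mul_self, one_smul]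
  simp only [extd, LinearMap.coe_mk, AddHom.coe_mk, Pi.smul_apply]
  rw [Finset.sum_congr rfl hterm, Finset.sum_const, Finset.card_attach, t.2, Nat.cast_smul_eq_nsmul]

lemma codiff_kappaDelta_of_pderiv_eq_zero {ω : Form n k} (hω : ∀ s i, pderiv i (ω s) = 0) :
    codiff n k (kappaDelta n k ω) = -((n - k : ℕ) : ℝ) • ω := by
  funext t
  have hterm : ∀ i ∈ (t.1ᶜ).attach,
      sgn t.1 i.1 • pderiv i.1 (kappaDelta n k ω (insertIdx t (Finset.mem_compl.mp i.2))) = ω t := by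
    rintro ⟨i, hi⟩ -
    have hi' : i ∉ t.1 := Finset.mem_compl.mp hi
    have herase : eraseIdx (insertIdx t hi') (Finset.mem_insert_self i t.1) = t :=
      Subtype.ext (Finset.erase_insert hi')
    rw [pderiv_kappaDelta_apply hω _ (Finset.mem_insert_self i t.1), herase, smul_smul,
      show sgn (insertIdx t hi').1 i = sgn t.1 i from sgn_insert_self _ _, sgn_mul_self, one_smul]
  simp only [codiff, LinearMap.coe_mk, AddHom.coe_mk, Pi.smul_apply]
  rw [Finset.sum_congr rfl hterm, Finset.sum_const, Finset.card_attach, Finset.card_compl,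
    Fintype.card_fin, t.2, neg_smul, Nat.cast_smul_eq_nsmul]

lemma pderiv_apply_eq_zero_of_mem_P0 {ω : Form n k} (hω : ω ∈ P0 n k) (s : Idx n k) (i : Fin n) :
    pderiv i (ω s) = 0 := by
  induction hω using Submodule.span_induction with
  | mem _ hx =>
    obtain ⟨σ, rfl⟩ := hx
    by_cases h : s = σ <;> simp [monForm, h]
  | zero => simp
  | add _ _ _ _ hx hy => simp [hx, hy]
  | smul _ _ _ hx => simp [hx]

lemma P0_le_ker_extd : P0 n k ≤ LinearMap.ker (extd n k) :=
  fun _ hω => extd_eq_zero_of_pderiv_eq_zero (pderiv_apply_eq_zero_of_mem_P0 hω)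

lemma P0_le_ker_codiff : P0 n (k+1) ≤ LinearMap.ker (codiff n k) :=
  fun _ hω => codiff_eq_zero_of_pderiv_eq_zero (pderiv_apply_eq_zero_of_mem_P0 hω)

end ConstantCoefficients

/-- equation (2.4) `eq:localcouple`. For the Whitney spaces on `ℝⁿ`:
`R(d^k, P_1^-Λ^k) = P_0Λ^{k+1} = N(δ_{k+1}, P_1^{*,-}Λ^{k+1})` and
`N(d^k, P_1^-Λ^k) = P_0Λ^k = R(δ_{k+1}, P_1^{*,-}Λ^{k+1})`. -/
theorem stmt9 (n k : ℕ) (hk : k + 1 ≤ n) :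
    Submodule.map (extd n k) (Pm n k) = P0 n (k+1) ∧
      P0 n (k+1) = LinearMap.ker (codiff n k) ⊓ PsS n k ∧
      LinearMap.ker (extd n k) ⊓ Pm n k = P0 n k ∧
      P0 n k = Submodule.map (codiff n k) (PsS n k) := by
  have hd : IsUnit ((k + 1 : ℕ) : ℝ) := (Nat.cast_ne_zero.mpr k.succ_ne_zero).isUnit
  have hδ : IsUnit (-((n - k : ℕ) : ℝ)) := (Nat.cast_ne_zero.mpr (by omega)).isUnit.neg
  have hdκ : ∀ ω ∈ P0 n (k+1), extd n k (koszul n k ω) = ((k + 1 : ℕ) : ℝ) • ω :=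
    fun _ hω => extd_koszul_of_pderiv_eq_zero (pderiv_apply_eq_zero_of_mem_P0 hω)
  have hδκ : ∀ ω ∈ P0 n k, codiff n k (kappaDelta n k ω) = -((n - k : ℕ) : ℝ) • ω :=
    fun _ hω => codiff_kappaDelta_of_pderiv_eq_zero (pderiv_apply_eq_zero_of_mem_P0 hω)
  exact ⟨Submodule.map_sup_map_eq_of_comp_eq_smul P0_le_ker_extd hd hdκ,
    (Submodule.ker_inf_sup_map_eq_of_comp_eq_smul P0_le_ker_codiff hδ hδκ).symm,
    Submodule.ker_inf_sup_map_eq_of_comp_eq_smul P0_le_ker_extd hd hdκ,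
    (Submodule.map_sup_map_eq_of_comp_eq_smul P0_le_ker_codiff hδ hδκ).symm⟩
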